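/- arXiv:2506.12816 — 6 statements merged into one kernel-verified Lean document; each statement's English description precedes it below -/
import Mathlib

section
/- For u, v ∈ ℝⁿ and distinct indices x, y, and any real s ∈ [0,1], define u' from u by replacing the coordinates at x and y with s(u(x)+u(y)) and (1−s)(u(x)+u(y)) respectively (and similarly v' from v). Then ‖u'−v'‖₁ ≤ ‖u−v‖₁, where ‖·‖₁ is the ℓ¹ norm on ℝⁿ. -/
theorem stmt_4 {n : ℕ} (u v : Fin n → ℝ) (x y : Fin n) (hxy : x ≠ y)
    (s : ℝ) (hs : s ∈ Set.Icc (0:ℝ) 1) :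
    ∑ i, |Function.update (Function.update u x (s * (u x + u y))) y ((1 - s) * (u x + u y)) i
        - Function.update (Function.update v x (s * (v x + v y))) y ((1 - s) * (v x + v y)) i|
      ≤ ∑ i, |u i - v i| := by
  obtain ⟨hs0, hs1⟩ := hs
  have hyx : y ≠ x := hxy.symm
  have hxm : y ∈ Finset.univ.erase x := Finset.mem_erase.mpr ⟨hyx, Finset.mem_univ y⟩
  rw [← Finset.sum_erase_add _ _ (Finset.mem_univ x),
      ← Finset.sum_erase_add _ _ hxm]
  conv_rhs => rw [← Finset.sum_erase_add _ _ (Finset.mem_univ x),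
      ← Finset.sum_erase_add _ _ hxm]
  have hsum : ∑ i ∈ (Finset.univ.erase x).erase y,
      |Function.update (Function.update u x (s * (u x + u y))) y ((1 - s) * (u x + u y)) i
        - Function.update (Function.update v x (s * (v x + v y))) y ((1 - s) * (v x + v y)) i|
      = ∑ i ∈ (Finset.univ.erase x).erase y, |u i - v i| := by
    refine Finset.sum_congr rfl (fun i hi => ?_)
    simp only [Finset.mem_erase, Finset.mem_univ, and_true] at hi
    obtain ⟨hiy, hix⟩ := hi
    rw [Function.update_of_ne hiy, Function.update_of_ne hiy,
        Function.update_of_ne hix, Function.update_of_ne hix]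
  rw [hsum]
  have hfy : Function.update (Function.update u x (s * (u x + u y))) y ((1 - s) * (u x + u y)) y
      = (1 - s) * (u x + u y) := Function.update_self _ _ _
  have hfx : Function.update (Function.update u x (s * (u x + u y))) y ((1 - s) * (u x + u y)) x
      = s * (u x + u y) := by rw [Function.update_of_ne hxy, Function.update_self]
  have hgy : Function.update (Function.update v x (s * (v x + v y))) y ((1 - s) * (v x + v y)) y
      = (1 - s) * (v x + v y) := Function.update_self _ _ _
  have hgx : Function.update (Function.update v x (s * (v x + v y))) y ((1 - s) * (v x + v y)) x
      = s * (v x + v y) := by rw [Function.update_of_ne hxy, Function.update_self]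
  rw [hfy, hfx, hgy, hgx]
  have key : |(1 - s) * (u x + u y) - (1 - s) * (v x + v y)|
      + |s * (u x + u y) - s * (v x + v y)| ≤ |u y - v y| + |u x - v x| := by
    rw [← mul_sub, ← mul_sub, abs_mul, abs_mul,
        abs_of_nonneg hs0, abs_of_nonneg (by linarith : (0:ℝ) ≤ 1 - s)]
    calc (1 - s) * |u x + u y - (v x + v y)| + s * |u x + u y - (v x + v y)|
        = |u x + u y - (v x + v y)| := by ring
      _ = |(u x - v x) + (u y - v y)| := by ring_nf
      _ ≤ |u x - v x| + |u y - v y| := abs_add_le _ _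
      _ = |u y - v y| + |u x - v x| := by ring
  linarith
end

section
/- For u, v ∈ ℝⁿ, distinct indices x, y, and s ∈ [0,1], define u' from u by replacing u(x) with s·u(x)+(1−s)·u(y) and u(y) with (1−s)·u(x)+s·u(y) (and similarly for v'). Then ‖u'−v'‖₁ ≤ ‖u−v‖₁. -/
theorem stmt_6 {n : ℕ} (u v : Fin n → ℝ) (x y : Fin n) (hxy : x ≠ y)
    (s : ℝ) (hs : s ∈ Set.Icc (0:ℝ) 1) :
    ∑ i, |Function.update (Function.update u x (s * u x + (1 - s) * u y)) y ((1 - s) * u x + s * u y) i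
        - Function.update (Function.update v x (s * v x + (1 - s) * v y)) y ((1 - s) * v x + s * v y) i|
      ≤ ∑ i, |u i - v i| := by
  obtain ⟨hs0, hs1⟩ := hs
  set f : Fin n → ℝ := fun i =>
    |Function.update (Function.update u x (s * u x + (1 - s) * u y)) y ((1 - s) * u x + s * u y) i
        - Function.update (Function.update v x (s * v x + (1 - s) * v y)) y ((1 - s) * v x + s * v y) i| with hf
  set g : Fin n → ℝ := fun i => |u i - v i| with hg
  have hx : x ∈ Finset.univ.erase y := Finset.mem_erase.2 ⟨hxy, Finset.mem_univ x⟩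
  have split : ∀ h : Fin n → ℝ, ∑ i, h i = h y + (h x + ∑ i ∈ (Finset.univ.erase y).erase x, h i) := by
    intro h
    rw [Finset.add_sum_erase _ _ hx, Finset.add_sum_erase _ _ (Finset.mem_univ y)]
  rw [split f, split g]
  have heq : ∀ i ∈ (Finset.univ.erase y).erase x, f i = g i := by
    intro i hi
    have hix := (Finset.mem_erase.1 hi).1
    have hiy := (Finset.mem_erase.1 (Finset.mem_erase.1 hi).2).1
    simp [hf, hg, Function.update_of_ne hix, Function.update_of_ne hiy]
  rw [Finset.sum_congr rfl heq]
  have hfy : f y = |(1 - s) * (u x - v x) + s * (u y - v y)| := by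
    simp [hf, Function.update_self]; ring_nf
  have hfx : f x = |s * (u x - v x) + (1 - s) * (u y - v y)| := by
    simp [hf, Function.update_of_ne hxy, Function.update_self]; ring_nf
  have h1 : f y ≤ (1 - s) * g x + s * g y := by
    rw [hfy]
    refine (abs_add_le _ _).trans ?_
    rw [abs_mul, abs_mul, abs_of_nonneg (by linarith), abs_of_nonneg hs0]
  have h2 : f x ≤ s * g x + (1 - s) * g y := by
    rw [hfx]
    refine (abs_add_le _ _).trans ?_
    rw [abs_mul, abs_mul, abs_of_nonneg hs0, abs_of_nonneg (by linarith : (0:ℝ) ≤ 1 - s)]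
  nlinarith [h1, h2]
end

section
/- Let n ≥ 2, let X be a [0,1]-valued random variable with X and 1−X identically distributed, and let Q be the random n×n matrix equal to the identity except on a uniformly random pair (x,y) of distinct indices, where the 2×2 block equals [[X, 1−X],[1−X, X]] (the GAM update matrix). Then for every v ∈ ℝⁿ, E[‖vQ‖₂²] = (1−λ)‖v‖₂² + nλ⟨v⟩², where λ = (2/(n−1))(1 − 2E[X²]) and ⟨v⟩ = (1/n)Σₓ v(x). -/
open MeasureTheory

theorem stmt_8 {Ω : Type*} [MeasurableSpace Ω] (P : Measure Ω) [IsProbabilityMeasure P]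
    (n : ℕ) (hn : 2 ≤ n) (X : Ω → ℝ) (hXm : Measurable X)
    (hX01 : ∀ ω, X ω ∈ Set.Icc (0:ℝ) 1)
    (hsym : P.map X = P.map (fun ω => 1 - X ω)) (v : Fin n → ℝ) :
    (1 / ((n : ℝ) * ((n : ℝ) - 1))) *
      ∑ p ∈ (Finset.univ : Finset (Fin n)).offDiag,
        ∫ ω, ∑ i, (Function.update (Function.update v p.1 (X ω * v p.1 + (1 - X ω) * v p.2))
            p.2 ((1 - X ω) * v p.1 + X ω * v p.2) i) ^ 2 ∂P
    = (1 - (2 / ((n : ℝ) - 1)) * (1 - 2 * ∫ ω, X ω ^ 2 ∂P)) * ∑ i, (v i) ^ 2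
      + (n : ℝ) * ((2 / ((n : ℝ) - 1)) * (1 - 2 * ∫ ω, X ω ^ 2 ∂P))
          * ((∑ i, v i) / (n : ℝ)) ^ 2 := by
  -- integrability
  have hIX : Integrable X P := by
    refine ⟨hXm.aestronglyMeasurable, ?_⟩
    refine HasFiniteIntegral.of_bounded (C := 1) (ae_of_all _ fun ω => ?_)
    have h := hX01 ω
    rw [Real.norm_eq_abs, abs_le]; constructor <;> linarith [h.1, h.2]
  have hIX2 : Integrable (fun ω => X ω ^ 2) P := by
    refine ⟨(hXm.pow_const 2).aestronglyMeasurable, ?_⟩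
    refine HasFiniteIntegral.of_bounded (C := 1) (ae_of_all _ fun ω => ?_)
    have h := hX01 ω
    rw [Real.norm_eq_abs, abs_le]
    constructor
    · nlinarith [h.1, h.2]
    · nlinarith [h.1, h.2]
  -- mean of X is 1/2
  have hEX : ∫ ω, X ω ∂P = 1 / 2 := by
    have hm1 : Measurable (fun ω => 1 - X ω) := measurable_const.sub hXm
    have h1 : ∫ ω, X ω ∂P = ∫ ω, (1 - X ω) ∂P := by
      calc ∫ ω, X ω ∂P = ∫ x, id x ∂(P.map X) :=
            (integral_map hXm.aemeasurable aestronglyMeasurable_id).symm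
        _ = ∫ x, id x ∂(P.map (fun ω => 1 - X ω)) := by rw [hsym]
        _ = ∫ ω, (1 - X ω) ∂P :=
            integral_map hm1.aemeasurable aestronglyMeasurable_id
    have h2 : ∫ ω, (1 - X ω) ∂P = 1 - ∫ ω, X ω ∂P := by
      rw [integral_sub (integrable_const 1) hIX, integral_const]
      simp
    rw [h2] at h1
    linarith
  set E2 : ℝ := ∫ ω, X ω ^ 2 ∂P with hE2
  set S : ℝ := ∑ i, v i with hS
  set V : ℝ := ∑ i, (v i) ^ 2 with hV
  -- per-pair integral
  have key : ∀ p ∈ (Finset.univ : Finset (Fin n)).offDiag,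
      (∫ ω, ∑ i, (Function.update (Function.update v p.1 (X ω * v p.1 + (1 - X ω) * v p.2))
            p.2 ((1 - X ω) * v p.1 + X ω * v p.2) i) ^ 2 ∂P)
      = V - (1 - 2 * E2) * (v p.1 - v p.2) ^ 2 := by
    rintro ⟨x, y⟩ hp
    have hxy : x ≠ y := (Finset.mem_offDiag.mp hp).2.2
    have hsum : ∀ ω, ∑ i, (Function.update (Function.update v x (X ω * v x + (1 - X ω) * v y))
          y ((1 - X ω) * v x + X ω * v y) i) ^ 2
        = V + (-2 * (v x - v y) ^ 2) * X ω + (2 * (v x - v y) ^ 2) * X ω ^ 2 := by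
      intro ω
      set a := X ω * v x + (1 - X ω) * v y with ha
      set b := (1 - X ω) * v x + X ω * v y with hb
      have step : ∑ i, (Function.update (Function.update v x a) y b i) ^ 2
          = V - v x ^ 2 - v y ^ 2 + a ^ 2 + b ^ 2 := by
        have e1 : ∀ i, (Function.update (Function.update v x a) y b i) ^ 2
            = Function.update (fun k => (Function.update v x a k) ^ 2) y (b ^ 2) i := by
          intro i
          exact Function.apply_update (fun _ t => t ^ 2) (Function.update v x a) y b i
        simp only [e1]
        rw [Finset.sum_update_of_mem (Finset.mem_univ y)]
        have e2 : ∀ i, (Function.update v x a i) ^ 2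
            = Function.update (fun k => v k ^ 2) x (a ^ 2) i := by
          intro i
          exact Function.apply_update (fun _ t => t ^ 2) v x a i
        simp only [e2]
        have hx : x ∈ (Finset.univ : Finset (Fin n)) \ {y} := by
          simp [hxy]
        rw [Finset.sum_update_of_mem hx]
        have hset : ((Finset.univ : Finset (Fin n)) \ {y}) \ {x}
            = (Finset.univ.erase y).erase x := by
          ext i; simp [and_comm]
        rw [hset, Finset.sum_erase_eq_sub (Finset.mem_erase.mpr ⟨hxy, Finset.mem_univ x⟩),
          Finset.sum_erase_eq_sub (Finset.mem_univ y), ← hV]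
        ring
      rw [step, ha, hb]
      ring
    simp only [hsum]
    have hIa : Integrable (fun ω => V + (-2 * (v x - v y) ^ 2) * X ω) P :=
      (integrable_const V).add (hIX.const_mul _)
    rw [integral_add hIa (hIX2.const_mul _),
      integral_add (integrable_const V) (hIX.const_mul _),
      integral_const_mul, integral_const_mul, integral_const, hEX, ← hE2]
    simp only [measure_univ, probReal_univ, ENNReal.toReal_one, smul_eq_mul, one_mul]
    ring
  rw [Finset.sum_congr rfl key]
  -- sum over offDiag
  have hod : ∑ p ∈ (Finset.univ : Finset (Fin n)).offDiag,
      (V - (1 - 2 * E2) * (v p.1 - v p.2) ^ 2)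
      = (n : ℝ) * ((n : ℝ) - 1) * V - (1 - 2 * E2) * (2 * n * V - 2 * S ^ 2) := by
    have hcard : ((Finset.univ : Finset (Fin n)).offDiag).card = n * (n - 1) := by
      rw [Finset.offDiag_card, Finset.card_univ, Fintype.card_fin, Nat.mul_sub, Nat.mul_one]
    rw [Finset.sum_sub_distrib, Finset.sum_const, hcard, ← Finset.mul_sum]
    have hsq : ∑ p ∈ (Finset.univ : Finset (Fin n)).offDiag, (v p.1 - v p.2) ^ 2
        = 2 * n * V - 2 * S ^ 2 := by
      have h1 : ∑ p ∈ (Finset.univ : Finset (Fin n)).offDiag, (v p.1 - v p.2) ^ 2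
          = ∑ p ∈ (Finset.univ : Finset (Fin n)) ×ˢ Finset.univ, (v p.1 - v p.2) ^ 2 := by
        refine Finset.sum_subset (by intro p hp; simp) ?_
        intro p _ hp
        have : p.1 = p.2 := by
          by_contra h
          exact hp (Finset.mem_offDiag.mpr ⟨Finset.mem_univ _, Finset.mem_univ _, h⟩)
        rw [this]; ring
      rw [h1, Finset.sum_product]
      have hrow : ∀ x : Fin n, ∑ y : Fin n, (v x - v y) ^ 2
          = (n : ℝ) * v x ^ 2 - 2 * v x * S + V := by
        intro x
        have he : ∀ y : Fin n, (v x - v y) ^ 2 = v x ^ 2 - (2 * v x) * v y + v y ^ 2 := by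
          intro y; ring
        simp only [he]
        rw [Finset.sum_add_distrib, Finset.sum_sub_distrib, Finset.sum_const,
          ← Finset.mul_sum, ← hS, ← hV]
        simp only [Finset.card_univ, Fintype.card_fin, nsmul_eq_mul]
        try ring
      simp only [hrow]
      rw [Finset.sum_add_distrib, Finset.sum_sub_distrib, ← Finset.mul_sum, ← hV,
        ← Finset.sum_mul, Finset.sum_const]
      have h2v : ∑ x : Fin n, 2 * v x = 2 * S := by
        rw [← Finset.mul_sum, ← hS]
      rw [h2v]
      simp only [Finset.card_univ, Fintype.card_fin, nsmul_eq_mul]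
      ring
    rw [hsq]
    have hc : ((n * (n - 1) : ℕ) : ℝ) = (n : ℝ) * ((n : ℝ) - 1) := by
      have h2 : (1 : ℕ) ≤ n := le_trans (by norm_num) hn
      push_cast [Nat.cast_sub h2]
      ring
    rw [nsmul_eq_mul, hc]
  rw [hod]
  have hn1 : (n : ℝ) - 1 ≠ 0 := by
    have : (2 : ℝ) ≤ (n : ℝ) := by exact_mod_cast hn
    linarith
  have hn0 : (n : ℝ) ≠ 0 := by
    have : (2 : ℝ) ≤ (n : ℝ) := by exact_mod_cast hn
    linarith
  field_simp
  ring
end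

section
/- Let n ≥ 2, X a symmetric [0,1]-valued random variable (Law(X)=Law(1−X)), and let ξ' be obtained from ξ ∈ ℝ₊ⁿ by one SEM update: a uniformly random ordered pair (x,y) of distinct indices is chosen, and both ξ(x), ξ(y) are replaced by Xξ(x)+(1−X)ξ(y). Then E[⟨ξ'⟩²] = (1 − 2(4E[X²]−1)/(n(n−1)))·⟨ξ⟩² + (2(4E[X²]−1)/(n²(n−1)))·‖ξ‖₂², where ⟨ξ⟩ = (1/n)Σₓ ξ(x). -/
open MeasureTheory

lemma sum_update_pair {n : ℕ} (ξ : Fin n → ℝ) {x y : Fin n} (hxy : x ≠ y) (v : ℝ) :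
    ∑ i, Function.update (Function.update ξ x v) y v i
      = (∑ i, ξ i) + (v - ξ x) + (v - ξ y) := by
  have h : ∀ i, Function.update (Function.update ξ x v) y v i
      = ξ i + (if i = x then v - ξ x else 0) + (if i = y then v - ξ y else 0) := by
    intro i
    simp only [Function.update_apply]
    split_ifs with h1 h2 <;> subst_vars <;> first | (exact absurd rfl hxy) | ring
  simp only [h, Finset.sum_add_distrib, Finset.sum_ite_eq' Finset.univ,
    Finset.mem_univ, if_true]

lemma key_integral {Ω : Type*} [MeasurableSpace Ω] (P : Measure Ω) [IsProbabilityMeasure P]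
    (X : Ω → ℝ) (hX1 : Integrable X P) (hX2 : Integrable (fun ω => X ω ^ 2) P)
    (hEX : ∫ ω, X ω ∂P = 1/2) (S c d : ℝ) :
    ∫ ω, ((S + (2 * X ω - 1) * c) / d) ^ 2 ∂P
      = (S ^ 2 + (4 * (∫ ω, X ω ^ 2 ∂P) - 1) * c ^ 2) / d ^ 2 := by
  have h : ∀ ω, ((S + (2 * X ω - 1) * c) / d) ^ 2
      = (S - c) ^ 2 / d ^ 2 + ((4 * S * c - 4 * c ^ 2) / d ^ 2) * X ω
        + (4 * c ^ 2 / d ^ 2) * X ω ^ 2 := fun ω => by ring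
  simp only [h]
  have hA : Integrable (fun ω => (S - c) ^ 2 / d ^ 2
      + (4 * S * c - 4 * c ^ 2) / d ^ 2 * X ω) P :=
    (integrable_const _).add (hX1.const_mul _)
  have hB : Integrable (fun ω => 4 * c ^ 2 / d ^ 2 * X ω ^ 2) P := hX2.const_mul _
  rw [integral_add hA hB,
      integral_add (integrable_const ((S - c) ^ 2 / d ^ 2))
        (hX1.const_mul ((4 * S * c - 4 * c ^ 2) / d ^ 2)),
      integral_const_mul, integral_const_mul, integral_const, hEX]
  simp only [measure_univ, probReal_univ, ENNReal.toReal_one, smul_eq_mul, one_mul]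
  ring

lemma sum_sq_pairs {n : ℕ} (ξ : Fin n → ℝ) :
    ∑ p ∈ (Finset.univ : Finset (Fin n)).offDiag, (ξ p.1 - ξ p.2) ^ 2
      = 2 * n * (∑ i, ξ i ^ 2) - 2 * (∑ i, ξ i) ^ 2 := by
  have h0 : ∑ p ∈ (Finset.univ : Finset (Fin n)).diag, (ξ p.1 - ξ p.2) ^ 2 = 0 := by
    refine Finset.sum_eq_zero fun p hp => ?_
    rw [Finset.mem_diag] at hp
    rw [hp.2, sub_self]
    ring
  have hsplit := Finset.sum_union (Finset.disjoint_diag_offDiag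
    (Finset.univ : Finset (Fin n))) (f := fun p => (ξ p.1 - ξ p.2) ^ 2)
  rw [Finset.diag_union_offDiag, h0, zero_add] at hsplit
  rw [← hsplit, Finset.sum_product]
  have hin : ∀ x : Fin n, ∑ y, (ξ x - ξ y) ^ 2
      = (n : ℝ) * ξ x ^ 2 - 2 * ξ x * (∑ i, ξ i) + ∑ i, ξ i ^ 2 := by
    intro x
    have h : ∀ y, (ξ x - ξ y) ^ 2 = ξ x ^ 2 - 2 * ξ x * ξ y + ξ y ^ 2 := fun y => by ring
    simp only [h, Finset.sum_add_distrib, Finset.sum_sub_distrib, Finset.sum_const,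
      ← Finset.mul_sum, Finset.card_univ, Fintype.card_fin, nsmul_eq_mul]
  simp only [hin, Finset.sum_add_distrib, Finset.sum_sub_distrib, Finset.sum_const,
    ← Finset.mul_sum, Finset.card_univ, Fintype.card_fin, nsmul_eq_mul, ← Finset.sum_mul]
  ring

theorem stmt_9 {Ω : Type*} [MeasurableSpace Ω] (P : Measure Ω) [IsProbabilityMeasure P]
    (n : ℕ) (hn : 2 ≤ n) (X : Ω → ℝ) (hXm : Measurable X)
    (hX01 : ∀ ω, X ω ∈ Set.Icc (0:ℝ) 1)
    (hsym : P.map X = P.map (fun ω => 1 - X ω))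
    (ξ : Fin n → ℝ) (hξ : ∀ i, 0 ≤ ξ i) :
    (1 / ((n : ℝ) * ((n : ℝ) - 1))) *
      ∑ p ∈ (Finset.univ : Finset (Fin n)).offDiag,
        ∫ ω, ((∑ i, Function.update (Function.update ξ p.1 (X ω * ξ p.1 + (1 - X ω) * ξ p.2))
            p.2 (X ω * ξ p.1 + (1 - X ω) * ξ p.2) i) / (n : ℝ)) ^ 2 ∂P
    = (1 - 2 * (4 * (∫ ω, X ω ^ 2 ∂P) - 1) / ((n : ℝ) * ((n : ℝ) - 1)))
        * ((∑ i, ξ i) / (n : ℝ)) ^ 2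
      + (2 * (4 * (∫ ω, X ω ^ 2 ∂P) - 1) / ((n : ℝ) ^ 2 * ((n : ℝ) - 1))) * ∑ i, (ξ i) ^ 2 := by
  have hX1 : Integrable X P := by
    refine (integrable_const (1:ℝ)).mono' hXm.aestronglyMeasurable (ae_of_all _ fun ω => ?_)
    have := hX01 ω
    rw [Real.norm_eq_abs, abs_of_nonneg this.1]
    exact this.2
  have hX2 : Integrable (fun ω => X ω ^ 2) P := by
    refine (integrable_const (1:ℝ)).mono' (hXm.pow_const 2).aestronglyMeasurable
      (ae_of_all _ fun ω => ?_)
    have := hX01 ω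
    rw [Real.norm_eq_abs, abs_of_nonneg (by positivity)]
    calc X ω ^ 2 ≤ 1 ^ 2 := by nlinarith [this.1, this.2]
    _ = 1 := one_pow 2
  have hEX : ∫ ω, X ω ∂P = 1/2 := by
    have h1 : ∫ x, x ∂(P.map X) = ∫ ω, X ω ∂P :=
      integral_map hXm.aemeasurable aestronglyMeasurable_id
    have h2 : ∫ x, x ∂(P.map (fun ω => 1 - X ω)) = ∫ ω, 1 - X ω ∂P :=
      integral_map (hXm.const_sub 1).aemeasurable aestronglyMeasurable_id
    have h3 : ∫ ω, (1:ℝ) - X ω ∂P = 1 - ∫ ω, X ω ∂P := by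
      rw [integral_sub (integrable_const 1) hX1, integral_const]
      simp
    have h4 : ∫ ω, X ω ∂P = 1 - ∫ ω, X ω ∂P := by
      conv_lhs => rw [← h1, hsym, h2, h3]
    linarith
  set S : ℝ := ∑ i, ξ i with hS
  set m : ℝ := 4 * (∫ ω, X ω ^ 2 ∂P) - 1 with hm
  have hstep : ∀ p ∈ (Finset.univ : Finset (Fin n)).offDiag,
      ∫ ω, ((∑ i, Function.update (Function.update ξ p.1
            (X ω * ξ p.1 + (1 - X ω) * ξ p.2))
            p.2 (X ω * ξ p.1 + (1 - X ω) * ξ p.2) i) / (n : ℝ)) ^ 2 ∂P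
        = (S ^ 2 + m * (ξ p.1 - ξ p.2) ^ 2) / (n : ℝ) ^ 2 := by
    intro p hp
    have hne : p.1 ≠ p.2 := (Finset.mem_offDiag.mp hp).2.2
    have heq : (fun ω => ((∑ i, Function.update (Function.update ξ p.1
            (X ω * ξ p.1 + (1 - X ω) * ξ p.2))
            p.2 (X ω * ξ p.1 + (1 - X ω) * ξ p.2) i) / (n : ℝ)) ^ 2)
        = fun ω => ((S + (2 * X ω - 1) * (ξ p.1 - ξ p.2)) / (n : ℝ)) ^ 2 := by
      funext ω
      rw [sum_update_pair ξ hne]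
      ring
    rw [heq, key_integral P X hX1 hX2 hEX]
  rw [Finset.sum_congr rfl hstep]
  have hcard : (((Finset.univ : Finset (Fin n)).offDiag.card : ℝ)) = (n : ℝ) * ((n : ℝ) - 1) := by
    rw [Finset.offDiag_card, Finset.card_univ, Fintype.card_fin]
    have h1 : n ≤ n * n := Nat.le_mul_of_pos_left n (by omega)
    push_cast [Nat.cast_sub h1]
    ring
  have hsum : ∑ p ∈ (Finset.univ : Finset (Fin n)).offDiag,
      (S ^ 2 + m * (ξ p.1 - ξ p.2) ^ 2) / (n : ℝ) ^ 2
      = ((n : ℝ) * ((n : ℝ) - 1) * S ^ 2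
          + m * (2 * (n : ℝ) * (∑ i, ξ i ^ 2) - 2 * S ^ 2)) / (n : ℝ) ^ 2 := by
    have h : ∀ p : Fin n × Fin n, (S ^ 2 + m * (ξ p.1 - ξ p.2) ^ 2) / (n : ℝ) ^ 2
        = S ^ 2 / (n : ℝ) ^ 2 + (m / (n : ℝ) ^ 2) * (ξ p.1 - ξ p.2) ^ 2 := fun p => by ring
    simp only [h, Finset.sum_add_distrib, Finset.sum_const, nsmul_eq_mul,
      ← Finset.mul_sum, hcard, sum_sq_pairs ξ]
    ring
  rw [hsum]
  have hn0 : (n : ℝ) ≠ 0 := by positivity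
  have hn1 : (n : ℝ) - 1 ≠ 0 := by
    have : (2 : ℝ) ≤ (n : ℝ) := by exact_mod_cast hn
    intro h; linarith
  field_simp
  ring
end

section
/- Let n ≥ 2 and X a symmetric [0,1]-valued random variable. If ξ' is obtained from ξ ∈ ℝ₊ⁿ by one SEM update (with uniformly random ordered pair of distinct indices, independent of X), then E[‖ξ' − ⟨ξ'⟩‖₂²] = (1 − λ)·‖ξ − ⟨ξ⟩‖₂², where λ = (2/(n−1))(1 − 2E[X²])·(1 + (4E[X²]−1)/(n(1−2E[X²]))), provided E[X²] ≠ 1/2. Here ⟨ξ⟩ denotes the constant vector whose entries equal the coordinate average of ξ. -/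
open MeasureTheory

lemma sum_update_pair_s10 {n : ℕ} (ξ : Fin n → ℝ) (a b : Fin n) (hab : a ≠ b) (w : ℝ) (g : ℝ → ℝ) :
    ∑ i, g (Function.update (Function.update ξ a w) b w i)
      = (∑ i, g (ξ i)) - g (ξ a) - g (ξ b) + 2 * g w := by
  have h1 : ∀ i ∈ ({a, b} : Finset (Fin n))ᶜ,
      g (Function.update (Function.update ξ a w) b w i) = g (ξ i) := by
    intro i hi
    simp only [Finset.mem_compl, Finset.mem_insert, Finset.mem_singleton, not_or] at hi
    rw [Function.update_of_ne hi.2, Function.update_of_ne hi.1]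
  rw [← Finset.sum_add_sum_compl ({a, b} : Finset (Fin n)),
      ← Finset.sum_add_sum_compl ({a, b} : Finset (Fin n)) (fun i => g (ξ i)),
      Finset.sum_congr rfl h1, Finset.sum_pair hab, Finset.sum_pair hab]
  have ha : Function.update (Function.update ξ a w) b w a = w := by
    rw [Function.update_of_ne hab, Function.update_self]
  have hb : Function.update (Function.update ξ a w) b w b = w := by
    rw [Function.update_self]
  rw [ha, hb]; ring

lemma offDiag_sum {n : ℕ} (F : Fin n × Fin n → ℝ) :
    ∑ p ∈ (Finset.univ : Finset (Fin n)).offDiag, F p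
      = (∑ a, ∑ b, F (a, b)) - ∑ a, F (a, a) := by
  have h := Finset.sum_union (f := F) (Finset.disjoint_diag_offDiag (Finset.univ : Finset (Fin n)))
  rw [Finset.diag_union_offDiag] at h
  rw [eq_sub_iff_add_eq, ← Finset.sum_diag, add_comm, ← h, Finset.sum_product]

lemma sum_sq_sub {n : ℕ} (ξ : Fin n → ℝ) (c : ℝ) :
    ∑ i, (ξ i - c)^2 = (∑ i, (ξ i)^2) - 2*c*(∑ i, ξ i) + n * c^2 := by
  have h : ∀ i, (ξ i - c)^2 = (ξ i)^2 - (2*c)*(ξ i) + c^2 := fun i => by ring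
  simp_rw [h, Finset.sum_add_distrib, Finset.sum_sub_distrib, ← Finset.mul_sum,
    Finset.sum_const, Finset.card_univ, Fintype.card_fin, nsmul_eq_mul]

lemma pair_calc {n : ℕ} (hn0 : (n:ℝ) ≠ 0) (ξ : Fin n → ℝ) (a b : Fin n) (hab : a ≠ b) (t : ℝ) :
    ∑ i, (Function.update (Function.update ξ a (t * ξ a + (1 - t) * ξ b))
            b (t * ξ a + (1 - t) * ξ b) i
          - (∑ j, Function.update (Function.update ξ a (t * ξ a + (1 - t) * ξ b))
            b (t * ξ a + (1 - t) * ξ b) j) / (n : ℝ)) ^ 2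
      = ((∑ j, (ξ j)^2) - (ξ a - ξ b)*(ξ a + ξ b) - ((∑ j, ξ j) - (ξ a - ξ b))^2/(n:ℝ))
        + (4*(ξ b)*(ξ a - ξ b) - 4*(ξ a - ξ b)*((∑ j, ξ j) - (ξ a - ξ b))/(n:ℝ)) * t
        + (2*(ξ a - ξ b)^2 - 4*(ξ a - ξ b)^2/(n:ℝ)) * t^2 := by
  have h1 : (∑ j, Function.update (Function.update ξ a (t * ξ a + (1 - t) * ξ b))
      b (t * ξ a + (1 - t) * ξ b) j) = (∑ j, ξ j) - ξ a - ξ b + 2*(t * ξ a + (1 - t) * ξ b) := by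
    simpa using sum_update_pair_s10 ξ a b hab (t * ξ a + (1 - t) * ξ b) (fun x => x)
  rw [h1]
  have h2 : ∑ i, (Function.update (Function.update ξ a (t * ξ a + (1 - t) * ξ b))
        b (t * ξ a + (1 - t) * ξ b) i
        - ((∑ j, ξ j) - ξ a - ξ b + 2*(t * ξ a + (1 - t) * ξ b)) / (n : ℝ)) ^ 2
      = (∑ i, (ξ i - ((∑ j, ξ j) - ξ a - ξ b + 2*(t * ξ a + (1 - t) * ξ b)) / (n : ℝ))^2)
        - (ξ a - ((∑ j, ξ j) - ξ a - ξ b + 2*(t * ξ a + (1 - t) * ξ b)) / (n : ℝ))^2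
        - (ξ b - ((∑ j, ξ j) - ξ a - ξ b + 2*(t * ξ a + (1 - t) * ξ b)) / (n : ℝ))^2
        + 2 * ((t * ξ a + (1 - t) * ξ b)
            - ((∑ j, ξ j) - ξ a - ξ b + 2*(t * ξ a + (1 - t) * ξ b)) / (n : ℝ))^2 := by
    simpa using sum_update_pair_s10 ξ a b hab (t * ξ a + (1 - t) * ξ b)
      (fun x => (x - ((∑ j, ξ j) - ξ a - ξ b + 2*(t * ξ a + (1 - t) * ξ b)) / (n : ℝ))^2)
  rw [h2, sum_sq_sub]
  field_simp
  ring

theorem stmt_10 {Ω : Type*} [MeasurableSpace Ω] (P : Measure Ω) [IsProbabilityMeasure P]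
    (n : ℕ) (hn : 2 ≤ n) (X : Ω → ℝ) (hXm : Measurable X)
    (hX01 : ∀ ω, X ω ∈ Set.Icc (0:ℝ) 1)
    (hsym : P.map X = P.map (fun ω => 1 - X ω))
    (hX2 : (∫ ω, X ω ^ 2 ∂P) ≠ 1 / 2)
    (ξ : Fin n → ℝ) (hξ : ∀ i, 0 ≤ ξ i) :
    (1 / ((n : ℝ) * ((n : ℝ) - 1))) *
      ∑ p ∈ (Finset.univ : Finset (Fin n)).offDiag,
        ∫ ω, ∑ i, (Function.update (Function.update ξ p.1 (X ω * ξ p.1 + (1 - X ω) * ξ p.2))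
              p.2 (X ω * ξ p.1 + (1 - X ω) * ξ p.2) i
            - (∑ j, Function.update (Function.update ξ p.1 (X ω * ξ p.1 + (1 - X ω) * ξ p.2))
              p.2 (X ω * ξ p.1 + (1 - X ω) * ξ p.2) j) / (n : ℝ)) ^ 2 ∂P
    = (1 - (2 / ((n : ℝ) - 1)) * (1 - 2 * ∫ ω, X ω ^ 2 ∂P)
          * (1 + (4 * (∫ ω, X ω ^ 2 ∂P) - 1) / ((n : ℝ) * (1 - 2 * ∫ ω, X ω ^ 2 ∂P))))
        * ∑ i, (ξ i - (∑ j, ξ j) / (n : ℝ)) ^ 2 := by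
  have h2 : (2:ℝ) ≤ (n:ℝ) := by exact_mod_cast hn
  have hn0 : (n:ℝ) ≠ 0 := by linarith
  have hn1 : (n:ℝ) - 1 ≠ 0 := by linarith
  have hXi : Integrable X P := by
    refine (integrable_const (1:ℝ)).mono' hXm.aestronglyMeasurable ?_
    filter_upwards with ω
    have h := hX01 ω
    rw [Real.norm_eq_abs, abs_le]
    exact ⟨by linarith [h.1], h.2⟩
  have hX2m : Measurable (fun ω => X ω ^ 2) := hXm.pow measurable_const
  have hX2i : Integrable (fun ω => X ω ^ 2) P := by
    refine (integrable_const (1:ℝ)).mono' hX2m.aestronglyMeasurable ?_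
    filter_upwards with ω
    have h := hX01 ω
    rw [Real.norm_eq_abs, abs_le]
    constructor
    · nlinarith [h.1, h.2]
    · nlinarith [h.1, h.2]
  have hEX : ∫ ω, X ω ∂P = 1 / 2 := by
    have e1 : ∫ x, x ∂(P.map X) = ∫ ω, X ω ∂P :=
      integral_map hXm.aemeasurable aestronglyMeasurable_id
    have e2 : ∫ x, x ∂(P.map (fun ω => 1 - X ω)) = ∫ ω, 1 - X ω ∂P :=
      integral_map (measurable_const.sub hXm).aemeasurable aestronglyMeasurable_id
    have h1 : ∫ ω, X ω ∂P = ∫ ω, (1 - X ω) ∂P := by rw [← e1, ← e2, hsym]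
    rw [integral_sub (integrable_const 1) hXi, integral_const] at h1
    simp at h1
    linarith
  set m := ∫ ω, X ω ^ 2 ∂P with hm
  have h2m : 1 - 2*m ≠ 0 := by
    intro h; apply hX2; linarith
  set S := ∑ j, ξ j with hS
  set Q := ∑ j, (ξ j)^2 with hQ
  -- per-pair integral
  have hkey : ∀ p ∈ (Finset.univ : Finset (Fin n)).offDiag,
      (∫ ω, ∑ i, (Function.update (Function.update ξ p.1 (X ω * ξ p.1 + (1 - X ω) * ξ p.2))
              p.2 (X ω * ξ p.1 + (1 - X ω) * ξ p.2) i
            - (∑ j, Function.update (Function.update ξ p.1 (X ω * ξ p.1 + (1 - X ω) * ξ p.2))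
              p.2 (X ω * ξ p.1 + (1 - X ω) * ξ p.2) j) / (n : ℝ)) ^ 2 ∂P)
        = (Q - S^2/(n:ℝ)) + (-(1-2*m) + (1-4*m)/(n:ℝ)) * (ξ p.1 - ξ p.2)^2 := by
    rintro ⟨a, b⟩ hp
    have hab : a ≠ b := (Finset.mem_offDiag.mp hp).2.2
    dsimp only
    have hpt : ∀ ω, (∑ i, (Function.update (Function.update ξ a (X ω * ξ a + (1 - X ω) * ξ b))
              b (X ω * ξ a + (1 - X ω) * ξ b) i
            - (∑ j, Function.update (Function.update ξ a (X ω * ξ a + (1 - X ω) * ξ b))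
              b (X ω * ξ a + (1 - X ω) * ξ b) j) / (n : ℝ)) ^ 2)
        = (Q - (ξ a - ξ b)*(ξ a + ξ b) - (S - (ξ a - ξ b))^2/(n:ℝ))
          + ((4*(ξ b)*(ξ a - ξ b) - 4*(ξ a - ξ b)*(S - (ξ a - ξ b))/(n:ℝ)) * X ω
          + (2*(ξ a - ξ b)^2 - 4*(ξ a - ξ b)^2/(n:ℝ)) * X ω ^ 2) := by
      intro ω
      rw [pair_calc hn0 ξ a b hab (X ω), hS, hQ]
      ring
    rw [integral_congr_ae (Filter.Eventually.of_forall hpt)]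
    have i1 : Integrable (fun ω => (4*ξ b*(ξ a - ξ b) - 4*(ξ a - ξ b)*(S - (ξ a - ξ b))/(n:ℝ)) * X ω) P := hXi.const_mul _
    have i2 : Integrable (fun ω => (2*(ξ a - ξ b)^2 - 4*(ξ a - ξ b)^2/(n:ℝ)) * X ω ^ 2) P := hX2i.const_mul _
    have i12 : Integrable (fun ω => (4*ξ b*(ξ a - ξ b) - 4*(ξ a - ξ b)*(S - (ξ a - ξ b))/(n:ℝ)) * X ω + (2*(ξ a - ξ b)^2 - 4*(ξ a - ξ b)^2/(n:ℝ)) * X ω ^ 2) P := i1.add i2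
    rw [integral_add (integrable_const _) i12, integral_add i1 i2, integral_const,
      integral_const_mul, integral_const_mul, hEX, ← hm]
    simp only [measure_univ, probReal_univ, ENNReal.toReal_one, smul_eq_mul, one_mul]
    field_simp
    ring
  rw [Finset.sum_congr rfl hkey]
  rw [offDiag_sum (fun p => (Q - S^2/(n:ℝ)) + (-(1-2*m) + (1-4*m)/(n:ℝ)) * (ξ p.1 - ξ p.2)^2)]
  have hdd : ∑ a, ∑ b, (ξ a - ξ b)^2 = 2*(n:ℝ)*Q - 2*S^2 := by
    have h1 : ∀ a : Fin n, ∑ b, (ξ a - ξ b)^2 = (n:ℝ)*(ξ a)^2 - (2*ξ a)*S + Q := by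
      intro a
      have he : ∀ b, (ξ a - ξ b)^2 = ((ξ a)^2 - (2*ξ a)*(ξ b)) + (ξ b)^2 := fun b => by ring
      simp_rw [he, Finset.sum_add_distrib, Finset.sum_sub_distrib, ← Finset.mul_sum,
        Finset.sum_const, Finset.card_univ, Fintype.card_fin, nsmul_eq_mul]
      rw [hS, hQ]
    simp_rw [h1, Finset.sum_add_distrib, Finset.sum_sub_distrib, ← Finset.mul_sum,
      Finset.sum_const, Finset.card_univ, Fintype.card_fin, nsmul_eq_mul]
    rw [show ∑ a, (2 * ξ a) * S = 2 * S * S from by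
        rw [← Finset.sum_mul]
        rw [show ∑ a, 2 * ξ a = 2 * S from by rw [Finset.mul_sum]],
      show ∑ a, (ξ a)^2 = Q from hQ.symm]
    ring
  have h4 : ∑ a, ∑ b, ((Q - S^2/(n:ℝ)) + (-(1-2*m) + (1-4*m)/(n:ℝ)) * (ξ a - ξ b)^2)
      = (n:ℝ)*((n:ℝ)*(Q - S^2/(n:ℝ))) + (-(1-2*m) + (1-4*m)/(n:ℝ)) * (2*(n:ℝ)*Q - 2*S^2) := by
    simp_rw [Finset.sum_add_distrib, Finset.sum_const, Finset.card_univ, Fintype.card_fin,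
      nsmul_eq_mul, ← Finset.mul_sum]
    rw [hdd]
  rw [h4]
  have h5 : ∑ a : Fin n, ((Q - S^2/(n:ℝ)) + (-(1-2*m) + (1-4*m)/(n:ℝ)) * (ξ a - ξ a)^2)
      = (n:ℝ)*(Q - S^2/(n:ℝ)) := by
    have e : ∀ a : Fin n, (Q - S^2/(n:ℝ)) + (-(1-2*m) + (1-4*m)/(n:ℝ)) * (ξ a - ξ a)^2
        = (Q - S^2/(n:ℝ)) := fun a => by ring
    simp_rw [e, Finset.sum_const, Finset.card_univ, Fintype.card_fin, nsmul_eq_mul]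
  rw [h5]
  rw [sum_sq_sub ξ (S/(n:ℝ)), ← hS, ← hQ]
  field_simp
  ring
end

section
/- Let η, η' ∈ ℝⁿ with Σₓ η(x) = Σₓ η'(x) (equal total mass), and let both evolve under the same SRM update: a uniformly random ordered pair (x,y) of distinct indices and a symmetric [0,1]-valued random variable X, with the update (v(x),v(y)) ↦ (X(v(x)+v(y)), (1−X)(v(x)+v(y))) applied to both vectors. Then E[‖η₁ − η'₁‖₂²] = (1 − λ_SRM)·‖η − η'‖₂², where λ_SRM = (2/n)(1 − 2E[X²](n−2)/(n−1)). -/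
open MeasureTheory

theorem stmt_14 {Ω : Type*} [MeasurableSpace Ω] (P : Measure Ω) [IsProbabilityMeasure P]
    (n : ℕ) (hn : 2 ≤ n) (X : Ω → ℝ) (hXm : Measurable X)
    (hX01 : ∀ ω, X ω ∈ Set.Icc (0:ℝ) 1)
    (hsym : P.map X = P.map (fun ω => 1 - X ω))
    (η η' : Fin n → ℝ) (hsum : ∑ i, η i = ∑ i, η' i) :
    (1 / ((n : ℝ) * ((n : ℝ) - 1))) *
      ∑ p ∈ (Finset.univ : Finset (Fin n)).offDiag,
        ∫ ω, ∑ i, (Function.update (Function.update η p.1 (X ω * (η p.1 + η p.2)))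
              p.2 ((1 - X ω) * (η p.1 + η p.2)) i
            - Function.update (Function.update η' p.1 (X ω * (η' p.1 + η' p.2)))
              p.2 ((1 - X ω) * (η' p.1 + η' p.2)) i) ^ 2 ∂P
    = (1 - (2 / (n : ℝ)) * (1 - 2 * (∫ ω, X ω ^ 2 ∂P) * ((n : ℝ) - 2) / ((n : ℝ) - 1)))
        * ∑ i, (η i - η' i) ^ 2 := by
  classical
  set v : Fin n → ℝ := fun i => η i - η' i with hv
  set S : ℝ := ∑ i, v i ^ 2 with hS
  set m : ℝ := ∫ ω, X ω ^ 2 ∂P with hm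
  have hT : ∑ i, v i = 0 := by
    simp only [hv, Finset.sum_sub_distrib, hsum, sub_self]
  -- integrability
  have hXi : Integrable (fun ω => X ω ^ 2) P := by
    refine (integrable_const (1:ℝ)).mono' ((hXm.pow_const 2).aestronglyMeasurable) ?_
    filter_upwards with ω
    rcases hX01 ω with ⟨h0, h1⟩
    rw [Real.norm_eq_abs, abs_of_nonneg (by positivity)]
    nlinarith
  have h1Xi : Integrable (fun ω => (1 - X ω) ^ 2) P := by
    refine (integrable_const (1:ℝ)).mono'
      (((measurable_const.sub hXm).pow_const 2).aestronglyMeasurable) ?_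
    filter_upwards with ω
    rcases hX01 ω with ⟨h0, h1⟩
    rw [Real.norm_eq_abs, abs_of_nonneg (by positivity)]
    nlinarith
  have h1X : ∫ ω, (1 - X ω) ^ 2 ∂P = m := by
    have h := congrArg (fun μ : Measure ℝ => ∫ t, t ^ 2 ∂μ) hsym
    rw [integral_map hXm.aemeasurable (by fun_prop),
      integral_map (φ := fun ω => 1 - X ω) (measurable_const.sub hXm).aemeasurable (by fun_prop)] at h
    rw [← h, hm]
  -- step 1: evaluate each integral
  have step1 : ∀ p ∈ (Finset.univ : Finset (Fin n)).offDiag,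
      (∫ ω, ∑ i, (Function.update (Function.update η p.1 (X ω * (η p.1 + η p.2)))
              p.2 ((1 - X ω) * (η p.1 + η p.2)) i
            - Function.update (Function.update η' p.1 (X ω * (η' p.1 + η' p.2)))
              p.2 ((1 - X ω) * (η' p.1 + η' p.2)) i) ^ 2 ∂P)
      = (S - v p.1 ^ 2 - v p.2 ^ 2) + 2 * m * (v p.1 + v p.2) ^ 2 := by
    rintro ⟨x, y⟩ hp
    have hxy : x ≠ y := (Finset.mem_offDiag.mp hp).2.2
    dsimp only
    have hpt : ∀ ω, (∑ i, (Function.update (Function.update η x (X ω * (η x + η y)))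
              y ((1 - X ω) * (η x + η y)) i
            - Function.update (Function.update η' x (X ω * (η' x + η' y)))
              y ((1 - X ω) * (η' x + η' y)) i) ^ 2)
        = (S - v x ^ 2 - v y ^ 2) + (X ω ^ 2 + (1 - X ω) ^ 2) * (v x + v y) ^ 2 := by
      intro ω
      set a : ℝ := X ω * (v x + v y) with ha
      set b : ℝ := (1 - X ω) * (v x + v y) with hb
      have hW : ∀ i, (Function.update (Function.update η x (X ω * (η x + η y)))
              y ((1 - X ω) * (η x + η y)) i
            - Function.update (Function.update η' x (X ω * (η' x + η' y)))
              y ((1 - X ω) * (η' x + η' y)) i)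
          = Function.update (Function.update v x a) y b i := by
        intro i
        rcases eq_or_ne i y with rfl | hiy
        · simp only [Function.update_self, hb, hv]; ring
        · rcases eq_or_ne i x with rfl | hix
          · simp only [Function.update_of_ne hiy, Function.update_self, ha, hv]; ring
          · simp only [Function.update_of_ne hiy, Function.update_of_ne hix, hv]
      have hsq : ∀ i, (Function.update (Function.update v x a) y b i) ^ 2
          = Function.update (Function.update (fun j => v j ^ 2) x (a ^ 2)) y (b ^ 2) i := by
        intro i
        rcases eq_or_ne i y with rfl | hiy
        · simp
        · rcases eq_or_ne i x with rfl | hix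
          · simp [Function.update_of_ne hiy]
          · simp [Function.update_of_ne hiy, Function.update_of_ne hix]
      calc ∑ i, (Function.update (Function.update η x (X ω * (η x + η y)))
              y ((1 - X ω) * (η x + η y)) i
            - Function.update (Function.update η' x (X ω * (η' x + η' y)))
              y ((1 - X ω) * (η' x + η' y)) i) ^ 2
          = ∑ i, Function.update (Function.update (fun j => v j ^ 2) x (a ^ 2)) y (b ^ 2) i := by
            refine Finset.sum_congr rfl fun i _ => ?_
            rw [hW i, hsq i]
        _ = b ^ 2 + (a ^ 2 + ∑ i ∈ ((Finset.univ.erase y).erase x), v i ^ 2) := by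
            rw [Finset.sum_update_of_mem (Finset.mem_univ y),
              Finset.sdiff_singleton_eq_erase]
            have hx' : x ∈ Finset.univ.erase y := Finset.mem_erase.mpr ⟨hxy, Finset.mem_univ x⟩
            rw [Finset.sum_update_of_mem hx', Finset.sdiff_singleton_eq_erase]
        _ = (S - v x ^ 2 - v y ^ 2) + (X ω ^ 2 + (1 - X ω) ^ 2) * (v x + v y) ^ 2 := by
            rw [Finset.sum_erase_eq_sub (Finset.mem_erase.mpr ⟨hxy, Finset.mem_univ x⟩),
              Finset.sum_erase_eq_sub (Finset.mem_univ y), ← hS, ha, hb]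
            ring
    calc (∫ ω, ∑ i, (Function.update (Function.update η x (X ω * (η x + η y)))
              y ((1 - X ω) * (η x + η y)) i
            - Function.update (Function.update η' x (X ω * (η' x + η' y)))
              y ((1 - X ω) * (η' x + η' y)) i) ^ 2 ∂P)
        = ∫ ω, ((S - v x ^ 2 - v y ^ 2) + (X ω ^ 2 + (1 - X ω) ^ 2) * (v x + v y) ^ 2) ∂P := by
          exact integral_congr_ae (Filter.Eventually.of_forall hpt)
      _ = (S - v x ^ 2 - v y ^ 2) + 2 * m * (v x + v y) ^ 2 := by
          have hI2 : Integrable (fun ω => (X ω ^ 2 + (1 - X ω) ^ 2) * (v x + v y) ^ 2) P :=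
            Integrable.mul_const (hXi.add h1Xi) _
          rw [integral_add (integrable_const _) hI2,
            integral_const, integral_mul_const, integral_add hXi h1Xi, h1X, ← hm]
          simp only [probReal_univ, measure_univ, ENNReal.toReal_one, one_smul, smul_eq_mul, one_mul]
          ring
  rw [Finset.sum_congr rfl step1]
  -- step 2: evaluate the sum over offDiag
  set F : Fin n × Fin n → ℝ :=
    fun p => (S - v p.1 ^ 2 - v p.2 ^ 2) + 2 * m * (v p.1 + v p.2) ^ 2 with hF
  have hunion : ∑ p ∈ (Finset.univ ×ˢ Finset.univ : Finset (Fin n × Fin n)), F p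
      = ∑ p ∈ (Finset.univ : Finset (Fin n)).diag, F p
        + ∑ p ∈ (Finset.univ : Finset (Fin n)).offDiag, F p := by
    rw [← Finset.sum_union (Finset.disjoint_diag_offDiag _), Finset.diag_union_offDiag]
  have hdiag : ∑ p ∈ (Finset.univ : Finset (Fin n)).diag, F p
      = (n : ℝ) * S - 2 * S + 8 * m * S := by
    rw [Finset.sum_diag]
    have : ∀ x : Fin n, F (x, x) = (S + (8 * m - 2) * v x ^ 2) := by
      intro x; simp only [hF]; ring
    rw [Finset.sum_congr rfl fun x _ => this x, Finset.sum_add_distrib,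
      Finset.sum_const, ← Finset.mul_sum, ← hS]
    simp [Finset.card_univ]
    ring
  have hprod : ∑ p ∈ (Finset.univ ×ˢ Finset.univ : Finset (Fin n × Fin n)), F p
      = (n : ℝ) * ((n : ℝ) * S - S + 2 * m * S) + (n : ℝ) * ((2 * m - 1) * S) := by
    rw [Finset.sum_product]
    have hinner : ∀ x : Fin n, ∑ y, F (x, y)
        = (n : ℝ) * (S - v x ^ 2 + 2 * m * v x ^ 2) + (2 * m - 1) * S := by
      intro x
      have : ∀ y : Fin n, F (x, y)
          = (S - v x ^ 2 + 2 * m * v x ^ 2) + ((2 * m - 1) * v y ^ 2 + (4 * m * v x) * v y) := by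
        intro y; simp only [hF]; ring
      rw [Finset.sum_congr rfl fun y _ => this y, Finset.sum_add_distrib,
        Finset.sum_const, Finset.sum_add_distrib, ← Finset.mul_sum, ← Finset.mul_sum,
        hT, ← hS]
      simp [Finset.card_univ]
      ring
    have h2 : ∀ x : Fin n, (n : ℝ) * (S - v x ^ 2 + 2 * m * v x ^ 2) + (2 * m - 1) * S
        = ((n : ℝ) * S + (2 * m - 1) * S) + ((n : ℝ) * (2 * m - 1)) * v x ^ 2 := by
      intro x; ring
    rw [Finset.sum_congr rfl fun x _ => hinner x,
      Finset.sum_congr rfl fun x _ => h2 x, Finset.sum_add_distrib,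
      Finset.sum_const, ← Finset.mul_sum, ← hS]
    simp [Finset.card_univ]
    ring
  have hoff : ∑ p ∈ (Finset.univ : Finset (Fin n)).offDiag, F p
      = ((n : ℝ) ^ 2 - 3 * (n : ℝ) + 2 + 4 * m * ((n : ℝ) - 2)) * S := by
    have := hunion
    rw [hprod, hdiag] at this
    linarith [this]
  rw [show (∑ p ∈ (Finset.univ : Finset (Fin n)).offDiag,
      ((S - v p.1 ^ 2 - v p.2 ^ 2) + 2 * m * (v p.1 + v p.2) ^ 2))
      = ∑ p ∈ (Finset.univ : Finset (Fin n)).offDiag, F p from rfl, hoff]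
  have hn0 : (n : ℝ) ≠ 0 := by positivity
  have hn1 : (n : ℝ) - 1 ≠ 0 := by
    have : (2 : ℝ) ≤ (n : ℝ) := by exact_mod_cast hn
    linarith
  have key : ((n : ℝ) ^ 2 - 3 * (n : ℝ) + 2 + 4 * m * ((n : ℝ) - 2))
      = ((n : ℝ) * ((n : ℝ) - 1))
        * (1 - (2 / (n : ℝ)) * (1 - 2 * m * ((n : ℝ) - 2) / ((n : ℝ) - 1))) := by
    field_simp
    ring
  rw [key, one_div, ← mul_assoc, ← mul_assoc, inv_mul_cancel₀ (mul_ne_zero hn0 hn1), one_mul]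
end
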